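/- Let μ be a measure on ℝ^n, φ a Young function, and T a sub-additive operator on measurable functions (i.e. |T(f+g)| ≤ |Tf| + |Tg| pointwise). Assume there are positive constants C, c with μ({x : |Tf(x)| > t}) ≤ C ∫_{ℝ^n} φ(c|f(x)|/t) dμ(x) for every measurable f and every t > 0, and that ‖Tf‖_{L^∞(μ)} ≤ C₀ ‖f‖_{L^∞(μ)} for some C₀ > 0 and every f. Then for every measurable f and every t > 0, μ({x : |Tf(x)| > t}) ≤ C ∫_{{x : |f(x)| > t/(2C₀)}} φ(2c|f(x)|/t) dμ(x). -/

import Mathlib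

open MeasureTheory ENNReal Set

noncomputable section

/-- The axis-parallel half-open cube with corner `a` and side length `h`. -/
def cube (n : ℕ) (a : Fin n → ℝ) (h : ℝ) : Set (Fin n → ℝ) :=
  {x | ∀ i, a i ≤ x i ∧ x i < a i + h}

/-- A cube in `ℝ^n` with sides parallel to the coordinate axes. -/
def IsCube {n : ℕ} (Q : Set (Fin n → ℝ)) : Prop :=
  ∃ a h, 0 < h ∧ Q = cube n a h

/-- A Young function: convex, increasing on `[0,∞)`, vanishing at `0`, tending to `∞`. -/
def IsYoung (φ : ℝ → ℝ) : Prop :=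
  ConvexOn ℝ (Ici 0) φ ∧ MonotoneOn φ (Ici 0) ∧ φ 0 = 0 ∧
    Filter.Tendsto φ Filter.atTop Filter.atTop

/-- The Luxemburg average `‖f‖_{φ,Q}`. -/
def luxNorm {n : ℕ} (φ : ℝ → ℝ) (f : (Fin n → ℝ) → ℝ) (Q : Set (Fin n → ℝ)) : ℝ :=
  sInf {l : ℝ | 0 < l ∧ ∫ y in Q, φ (|f y| / l) ≤ (volume Q).toReal}

/-- The generalized maximal operator `M_φ f`. -/
def maximalOp {n : ℕ} (φ : ℝ → ℝ) (f : (Fin n → ℝ) → ℝ) (x : Fin n → ℝ) : ℝ≥0∞ :=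
  ⨆ (Q : Set (Fin n → ℝ)) (_ : IsCube Q ∧ x ∈ Q), ENNReal.ofReal (luxNorm φ f Q)

/-- The generalized fractional maximal operator `M_{γ,φ} f`. -/
def fracMaximalOp {n : ℕ} (γ : ℝ) (φ : ℝ → ℝ) (f : (Fin n → ℝ) → ℝ) (x : Fin n → ℝ) : ℝ≥0∞ :=
  ⨆ (Q : Set (Fin n → ℝ)) (_ : IsCube Q ∧ x ∈ Q),
    (volume Q) ^ (γ / (n : ℝ)) * ENNReal.ofReal (luxNorm φ f Q)

/-- A weight: locally integrable, positive (and finite) a.e. -/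
def IsWeight {n : ℕ} (w : (Fin n → ℝ) → ℝ) : Prop :=
  LocallyIntegrable w volume ∧ ∀ᵐ x ∂(volume : Measure (Fin n → ℝ)), 0 < w x

/-- The Muckenhoupt `A₁` class. -/
def MuckenhouptA1 {n : ℕ} (w : (Fin n → ℝ) → ℝ) : Prop :=
  IsWeight w ∧ ∃ C > 0, ∀ Q : Set (Fin n → ℝ), IsCube Q →
    ∫ x in Q, w x ≤ C * essInf w (volume.restrict Q) * (volume Q).toReal

/-- The Muckenhoupt `A_∞` class, via the `∫_E w ≤ C (|E|/|Q|)^ε ∫_Q w` characterization. -/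
def MuckenhouptAinfty {n : ℕ} (w : (Fin n → ℝ) → ℝ) : Prop :=
  IsWeight w ∧ ∃ C > 0, ∃ ε > 0, ∀ Q : Set (Fin n → ℝ), IsCube Q →
    ∀ E ⊆ Q, MeasurableSet E →
      ∫ x in E, w x ≤ C * ((volume E).toReal / (volume Q).toReal) ^ ε * ∫ x in Q, w x

/-- The reverse Hölder class `RH_s`. -/
def MemRH {n : ℕ} (s : ℝ) (w : (Fin n → ℝ) → ℝ) : Prop :=
  IsWeight w ∧ ∃ C > 0, ∀ Q : Set (Fin n → ℝ), IsCube Q →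
    ((∫ x in Q, w x ^ s) / (volume Q).toReal) ^ (1 / s) ≤
      C * ((∫ x in Q, w x) / (volume Q).toReal)

/-- A submultiplicative function: `φ(st) ≤ C φ(s) φ(t)`. -/
def Submultiplicative (φ : ℝ → ℝ) : Prop :=
  ∃ C > 0, ∀ s t : ℝ, 0 ≤ s → 0 ≤ t → φ (s * t) ≤ C * φ s * φ t

/-- `φ` has lower type `r`: `φ(st) ≤ C s^r φ(t)` for `0 < s ≤ 1`, `t > 0`. -/
def HasLowerType (r : ℝ) (φ : ℝ → ℝ) : Prop :=
  ∃ C > 0, ∀ s t : ℝ, 0 < s → s ≤ 1 → 0 < t → φ (s * t) ≤ C * s ^ r * φ t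

/-- The family `𝔉_r` of Young functions. -/
def MemFr (r : ℝ) (φ : ℝ → ℝ) : Prop :=
  IsYoung φ ∧ Submultiplicative φ ∧ HasLowerType r φ ∧
    ∃ C₀ > 0, ∃ δ : ℝ, 0 ≤ δ ∧ ∃ tstar : ℝ, 1 ≤ tstar ∧
      ∀ t : ℝ, tstar ≤ t → φ t ≤ C₀ * (Real.log t) ^ δ * t ^ r

/-- `log⁺ t = max {0, log t}`. -/
def logPlus (t : ℝ) : ℝ := max 0 (Real.log t)

/-- A dyadic grid in `ℝ^n`. -/
def IsDyadicGrid {n : ℕ} (D : Set (Set (Fin n → ℝ))) : Prop :=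
  (∀ Q ∈ D, ∃ (a : Fin n → ℝ) (k : ℤ), Q = cube n a ((2 : ℝ) ^ k)) ∧
  (∀ Q ∈ D, ∀ P ∈ D, (Q ∩ P).Nonempty → Q ⊆ P ∨ P ⊆ Q) ∧
  (∀ k : ℤ, ⋃₀ {Q | Q ∈ D ∧ ∃ a, Q = cube n a ((2 : ℝ) ^ k)} = univ)

/-- The dyadic maximal operator `M_{φ,𝒟} f`. -/
def dyadicMaximalOp {n : ℕ} (D : Set (Set (Fin n → ℝ))) (φ : ℝ → ℝ)
    (f : (Fin n → ℝ) → ℝ) (x : Fin n → ℝ) : ℝ≥0∞ :=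
  ⨆ (Q : Set (Fin n → ℝ)) (_ : Q ∈ D ∧ x ∈ Q), ENNReal.ofReal (luxNorm φ f Q)

/-- The generalized inverse `φ⁻¹(t) = inf {s ≥ 0 : φ(s) ≥ t}`, with `inf ∅ = ∞`. -/
def genInv (φ : ℝ → ℝ) (t : ℝ) : ℝ≥0∞ :=
  ⨅ (s : ℝ) (_ : 0 ≤ s ∧ t ≤ φ s), ENNReal.ofReal s

/-! Split `f = f₁ + f₂` at height `t / (2 C₀)`, with `f₁ = f · 1_{|f| > t/(2C₀)}`. The bounded
part has `‖T f₂‖_∞ ≤ t / 2`, so by sub-additivity `{t < |T f|}` lies, up to a null set, in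
`{t / 2 < |T f₁|}`. The weak-type bound at level `t / 2` for `f₁` then gives the restricted
integral, since `φ 0 = 0` kills the integrand off the support of `f₁`. -/

section

variable {α : Type*}

lemma abs_indicator_compl_lt_abs_le (f : α → ℝ) {a : ℝ} (ha : 0 ≤ a) (x : α) :
    |{x | a < |f x|}ᶜ.indicator f x| ≤ a := by
  by_cases hx : a < |f x|
  · simpa [hx] using ha
  · simpa [hx] using not_lt.mp hx

variable [MeasurableSpace α] {μ : Measure α}

lemma ae_abs_le_of_eLpNorm_top_le {g : α → ℝ} {s : ℝ} (hs : 0 ≤ s)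
    (hg : eLpNorm g ⊤ μ ≤ ENNReal.ofReal s) : ∀ᵐ x ∂μ, |g x| ≤ s := by
  rw [eLpNorm_exponent_top] at hg
  filter_upwards [enorm_ae_le_eLpNormEssSup g μ] with x hx
  have := hx.trans hg
  rwa [Real.enorm_eq_ofReal_abs, ofReal_le_ofReal_iff hs] at this

lemma eLpNorm_top_indicator_compl_lt_abs_le (f : α → ℝ) {a : ℝ} (ha : 0 ≤ a) :
    eLpNorm ({x | a < |f x|}ᶜ.indicator f) ⊤ μ ≤ ENNReal.ofReal a :=
  eLpNormEssSup_le_of_ae_bound <| .of_forall (abs_indicator_compl_lt_abs_le f ha)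

lemma measure_lt_abs_le_of_abs_le_add {F G H : α → ℝ} {s t : ℝ}
    (hH : ∀ x, |H x| ≤ |F x| + |G x|) (hG : ∀ᵐ x ∂μ, |G x| ≤ s) :
    μ {x | s + t < |H x|} ≤ μ {x | t < |F x|} := by
  refine measure_mono_ae ?_
  filter_upwards [hG] with x hx (hlt : s + t < |H x|)
  show t < |F x|
  linarith [hH x]

lemma lintegral_comp_indicator {M : Type*} [Zero M] {S : Set α} (hS : MeasurableSet S)
    {g : M → ℝ≥0∞} (hg : g 0 = 0) (f : α → M) :
    ∫⁻ x, g (S.indicator f x) ∂μ = ∫⁻ x in S, g (f x) ∂μ := by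
  rw [← lintegral_indicator hS]
  exact congrArg _ (indicator_comp_of_zero hg).symm

end

theorem modular_weak_type_restricted_general {n : ℕ} (μ : Measure (Fin n → ℝ))
    (φ : ℝ → ℝ) (hφ : IsYoung φ)
    (T : ((Fin n → ℝ) → ℝ) → ((Fin n → ℝ) → ℝ))
    (hsub : ∀ f g : (Fin n → ℝ) → ℝ, ∀ x, |T (f + g) x| ≤ |T f x| + |T g x|)
    (C c C₀ : ℝ) (hC₀ : 0 < C₀)
    (hweak : ∀ f : (Fin n → ℝ) → ℝ, Measurable f → ∀ t : ℝ, 0 < t →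
      μ {x | t < |T f x|} ≤
        ENNReal.ofReal C * ∫⁻ x, ENNReal.ofReal (φ (c * |f x| / t)) ∂μ)
    (hinfty : ∀ f : (Fin n → ℝ) → ℝ, eLpNorm (T f) ⊤ μ ≤ ENNReal.ofReal C₀ * eLpNorm f ⊤ μ) :
    ∀ f : (Fin n → ℝ) → ℝ, Measurable f → ∀ t : ℝ, 0 < t →
      μ {x | t < |T f x|} ≤
        ENNReal.ofReal C * ∫⁻ x in {x | t / (2 * C₀) < |f x|},
          ENNReal.ofReal (φ (2 * c * |f x| / t)) ∂μ := by
  intro f hf t ht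
  set S := {x | t / (2 * C₀) < |f x|}
  have hS : MeasurableSet S := measurableSet_lt measurable_const hf.abs
  have hsmall : ∀ᵐ x ∂μ, |T (Sᶜ.indicator f) x| ≤ t / 2 := by
    refine ae_abs_le_of_eLpNorm_top_le (half_pos ht).le ((hinfty _).trans ?_)
    calc ENNReal.ofReal C₀ * eLpNorm (Sᶜ.indicator f) ⊤ μ
        ≤ ENNReal.ofReal C₀ * ENNReal.ofReal (t / (2 * C₀)) := by
          gcongr; exact eLpNorm_top_indicator_compl_lt_abs_le f (by positivity)
      _ = ENNReal.ofReal (t / 2) := by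
          rw [← ENNReal.ofReal_mul hC₀.le]; congr 1; field_simp
  calc μ {x | t < |T f x|}
      = μ {x | t / 2 + t / 2 < |T (S.indicator f + Sᶜ.indicator f) x|} := by
        rw [add_halves, indicator_self_add_compl]
    _ ≤ μ {x | t / 2 < |T (S.indicator f) x|} :=
        measure_lt_abs_le_of_abs_le_add (hsub _ _) hsmall
    _ ≤ ENNReal.ofReal C * ∫⁻ x, ENNReal.ofReal (φ (c * |S.indicator f x| / (t / 2))) ∂μ :=
        hweak _ (hf.indicator hS) _ (half_pos ht)
    _ = ENNReal.ofReal C * ∫⁻ x in S, ENNReal.ofReal (φ (2 * c * |f x| / t)) ∂μ := by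
        rw [lintegral_comp_indicator (g := fun y ↦ ENNReal.ofReal (φ (c * |y| / (t / 2)))) hS
          (by simp [hφ.2.2.1])]
        congr 2 with x
        ring_nf

/-- Restriction of the domain of integration in a modular weak type inequality for a
sub-additive operator which is bounded on `L^∞(μ)`. -/
theorem modular_weak_type_restricted {n : ℕ} (μ : Measure (Fin n → ℝ))
    (φ : ℝ → ℝ) (hφ : IsYoung φ)
    (T : ((Fin n → ℝ) → ℝ) → ((Fin n → ℝ) → ℝ))
    (hsub : ∀ f g : (Fin n → ℝ) → ℝ, ∀ x, |T (f + g) x| ≤ |T f x| + |T g x|)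
    (C c C₀ : ℝ) (hC : 0 < C) (hc : 0 < c) (hC₀ : 0 < C₀)
    (hweak : ∀ f : (Fin n → ℝ) → ℝ, Measurable f → ∀ t : ℝ, 0 < t →
      μ {x | t < |T f x|} ≤
        ENNReal.ofReal C * ∫⁻ x, ENNReal.ofReal (φ (c * |f x| / t)) ∂μ)
    (hinfty : ∀ f : (Fin n → ℝ) → ℝ, eLpNorm (T f) ⊤ μ ≤ ENNReal.ofReal C₀ * eLpNorm f ⊤ μ) :
    ∀ f : (Fin n → ℝ) → ℝ, Measurable f → ∀ t : ℝ, 0 < t →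
      μ {x | t < |T f x|} ≤
        ENNReal.ofReal C * ∫⁻ x in {x | t / (2 * C₀) < |f x|},
          ENNReal.ofReal (φ (2 * c * |f x| / t)) ∂μ :=
  modular_weak_type_restricted_general μ φ hφ T hsub C c C₀ hC₀ hweak hinfty
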